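/- Let M ≥ 6 be even and N1 ≥ 2. The cardinality of the TSAULAs sum-difference co-array restricted to its maximal symmetric hole-free interval equals 4·N1·M + 4M − 7, which exceeds the corresponding count 4·N1·M + 2M − 3 for AULAs (with the same N1, M) by 2M − 4 > 0. -/
import Mathlib


def diffSet (P : Set ℤ) : Set ℤ := {d | ∃ u ∈ P, ∃ v ∈ P, d = u - v}

def sumSet (P : Set ℤ) : Set ℤ := {s | ∃ u ∈ P, ∃ v ∈ P, s = u + v}

def SDC (P : Set ℤ) : Set ℤ :=
  diffSet P ∪ sumSet P ∪ {s | ∃ u ∈ P, ∃ v ∈ P, s = -u - v}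

noncomputable def weight (P : Set ℤ) (f : ℤ) : ℕ :=
  Set.ncard {p : ℤ × ℤ | p.1 ∈ P ∧ p.2 ∈ P ∧ p.1 - p.2 = f}

def AULAs (M N1 : ℤ) : Set ℤ :=
  {x | ∃ k, 0 ≤ k ∧ k ≤ N1 - 1 ∧ x = k * M} ∪
  {x | ∃ j, 1 ≤ j ∧ j ≤ M / 2 ∧ x = N1 * M - M / 2 - 1 + j} ∪
  {x | ∃ j, 1 ≤ j ∧ j ≤ M / 2 - 1 ∧ x = N1 * M + j}

def SAULAs (M N1 : ℤ) : Set ℤ :=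
  {x | ∃ k, 0 ≤ k ∧ k ≤ N1 - 1 ∧ x = M / 2 + k * M} ∪
  {x | ∃ j, 1 ≤ j ∧ j ≤ M / 2 ∧ x = N1 * M - 1 + j} ∪
  {x | ∃ j, 1 ≤ j ∧ j ≤ M / 2 - 1 ∧ x = N1 * M + M / 2 + j}

def TSAULAs (M N1 : ℤ) : Set ℤ :=
  {x | ∃ k, 0 ≤ k ∧ k ≤ N1 - 1 ∧ x = M / 2 + k * M} ∪
  {x | ∃ j, 1 ≤ j ∧ j ≤ M / 2 - 1 ∧ x = N1 * M - M / 2 + 2 * j} ∪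
  {-(N1 * M) - M / 2 + 1} ∪
  {x | ∃ j, 1 ≤ j ∧ j ≤ M / 2 - 1 ∧ x = N1 * M + M / 2 - 1 + 2 * j}

def CoTSAULAs (M N1 : ℤ) : Set ℤ :=
  TSAULAs M N1 ∪ {N1 * M + 3 * M / 2 - 2}

lemma sdcDiff {P : Set ℤ} {u v n : ℤ} (hu : u ∈ P) (hv : v ∈ P) (h : n = u - v) :
    n ∈ SDC P := Or.inl (Or.inl ⟨u, hu, v, hv, h⟩)

lemma sdcSum {P : Set ℤ} {u v n : ℤ} (hu : u ∈ P) (hv : v ∈ P) (h : n = u + v) :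
    n ∈ SDC P := Or.inl (Or.inr ⟨u, hu, v, hv, h⟩)

lemma sdcNsum {P : Set ℤ} {u v n : ℤ} (hu : u ∈ P) (hv : v ∈ P) (h : n = -u - v) :
    n ∈ SDC P := Or.inr ⟨u, hu, v, hv, h⟩

lemma sdcNeg {P : Set ℤ} {n : ℤ} (h : n ∈ SDC P) : -n ∈ SDC P := by
  rcases h with (⟨u,hu,v,hv,rfl⟩|⟨u,hu,v,hv,rfl⟩)|⟨u,hu,v,hv,rfl⟩
  · exact sdcDiff hv hu (by ring)
  · exact sdcNsum hu hv (by ring)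
  · exact sdcSum hu hv (by ring)

section
variable {H N1 : ℤ}

lemma tA {k x : ℤ} (h0 : 0 ≤ k) (h1 : k ≤ N1 - 1) (hx : x = H + k * (2*H)) :
    x ∈ TSAULAs (2*H) N1 := by
  have h2 : (2*H) / 2 = H := by omega
  exact Or.inl (Or.inl (Or.inl ⟨k, h0, h1, by rw [h2]; exact hx⟩))

lemma tB {j x : ℤ} (h0 : 1 ≤ j) (h1 : j ≤ H - 1) (hx : x = N1 * (2*H) - H + 2 * j) :
    x ∈ TSAULAs (2*H) N1 := by
  have h2 : (2*H) / 2 = H := by omega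
  exact Or.inl (Or.inl (Or.inr ⟨j, h0, by omega, by rw [h2]; exact hx⟩))

lemma tC {x : ℤ} (hx : x = -(N1 * (2*H)) - H + 1) : x ∈ TSAULAs (2*H) N1 := by
  have h2 : (2*H) / 2 = H := by omega
  exact Or.inl (Or.inr (by rw [Set.mem_singleton_iff, h2]; exact hx))

lemma tD {j x : ℤ} (h0 : 1 ≤ j) (h1 : j ≤ H - 1) (hx : x = N1 * (2*H) + H - 1 + 2 * j) :
    x ∈ TSAULAs (2*H) N1 := by
  have h2 : (2*H) / 2 = H := by omega
  exact Or.inr ⟨j, h0, by omega, by rw [h2]; exact hx⟩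

lemma aA {k x : ℤ} (h0 : 0 ≤ k) (h1 : k ≤ N1 - 1) (hx : x = k * (2*H)) :
    x ∈ AULAs (2*H) N1 := Or.inl (Or.inl ⟨k, h0, h1, hx⟩)

lemma aB {j x : ℤ} (h0 : 1 ≤ j) (h1 : j ≤ H) (hx : x = N1 * (2*H) - H - 1 + j) :
    x ∈ AULAs (2*H) N1 := by
  have h2 : (2*H) / 2 = H := by omega
  exact Or.inl (Or.inr ⟨j, h0, by omega, by rw [h2]; exact hx⟩)

lemma aC {j x : ℤ} (h0 : 1 ≤ j) (h1 : j ≤ H - 1) (hx : x = N1 * (2*H) + j) :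
    x ∈ AULAs (2*H) N1 := by
  have h2 : (2*H) / 2 = H := by omega
  exact Or.inr ⟨j, h0, by omega, hx⟩

end

section
variable {H N1 : ℤ}

lemma tElem {x : ℤ} (hx : x ∈ TSAULAs (2*H) N1) :
    x = -(2*N1*H) - H + 1 ∨
    (∃ k, 0 ≤ k ∧ k ≤ N1 - 1 ∧ x = 2*k*H + H) ∨
    (∃ j, 1 ≤ j ∧ j ≤ H - 1 ∧ x = 2*N1*H - H + 2*j) ∨
    (∃ j, 1 ≤ j ∧ j ≤ H - 1 ∧ x = 2*N1*H + H - 1 + 2*j) := by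
  have h2 : (2*H) / 2 = H := by omega
  rcases hx with ((⟨k,h0,h1,rfl⟩|⟨j,h0,h1,rfl⟩)|hc)|⟨j,h0,h1,rfl⟩
  · exact Or.inr (Or.inl ⟨k, h0, h1, by rw [h2]; ring⟩)
  · exact Or.inr (Or.inr (Or.inl ⟨j, h0, by omega, by rw [h2]; ring⟩))
  · rw [Set.mem_singleton_iff] at hc
    exact Or.inl (by rw [hc, h2]; ring)
  · exact Or.inr (Or.inr (Or.inr ⟨j, h0, by omega, by rw [h2]; ring⟩))

lemma aElem {x : ℤ} (hx : x ∈ AULAs (2*H) N1) :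
    (∃ k, 0 ≤ k ∧ k ≤ N1 - 1 ∧ x = 2*k*H) ∨
    (∃ j, 1 ≤ j ∧ j ≤ H ∧ x = 2*N1*H - H - 1 + j) ∨
    (∃ j, 1 ≤ j ∧ j ≤ H - 1 ∧ x = 2*N1*H + j) := by
  have h2 : (2*H) / 2 = H := by omega
  rcases hx with (⟨k,h0,h1,rfl⟩|⟨j,h0,h1,rfl⟩)|⟨j,h0,h1,rfl⟩
  · exact Or.inl ⟨k, h0, h1, by ring⟩
  · exact Or.inr (Or.inl ⟨j, h0, by omega, by rw [h2]; ring⟩)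
  · exact Or.inr (Or.inr ⟨j, h0, by omega, by ring⟩)

lemma tLB (hH : 3 ≤ H) (hN1 : 2 ≤ N1) {x : ℤ} (hx : x ∈ TSAULAs (2*H) N1) :
    -(2*N1*H) - H + 1 ≤ x := by
  rcases tElem hx with h | ⟨k,h0,h1,rfl⟩ | ⟨j,h0,h1,rfl⟩ | ⟨j,h0,h1,rfl⟩
  · omega
  · nlinarith [mul_nonneg (by linarith : (0:ℤ) ≤ k + N1) (by linarith : (0:ℤ) ≤ H)]
  · nlinarith [mul_nonneg (by linarith : (0:ℤ) ≤ N1) (by linarith : (0:ℤ) ≤ H)]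
  · nlinarith [mul_nonneg (by linarith : (0:ℤ) ≤ N1) (by linarith : (0:ℤ) ≤ H)]

lemma tUB (hH : 3 ≤ H) (hN1 : 2 ≤ N1) {x : ℤ} (hx : x ∈ TSAULAs (2*H) N1) :
    x ≤ 2*N1*H + 3*H - 3 := by
  rcases tElem hx with h | ⟨k,h0,h1,rfl⟩ | ⟨j,h0,h1,rfl⟩ | ⟨j,h0,h1,rfl⟩
  · nlinarith [mul_nonneg (by linarith : (0:ℤ) ≤ N1) (by linarith : (0:ℤ) ≤ H)]
  · nlinarith [mul_nonneg (by linarith : (0:ℤ) ≤ N1 - 1 - k) (by linarith : (0:ℤ) ≤ H)]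
  · omega
  · omega

lemma tNot (hH : 3 ≤ H) (hN1 : 2 ≤ N1) :
    (4*N1*H + 4*H - 3) ∉ SDC (TSAULAs (2*H) N1) := by
  have hNH : 6 ≤ N1 * H := by nlinarith
  rintro ((⟨u,hu,v,hv,he⟩|⟨u,hu,v,hv,he⟩)|⟨u,hu,v,hv,he⟩)
  · have h1 := tUB hH hN1 hu
    have h2 := tLB hH hN1 hv
    linarith
  · -- sum case
    have hu1 := tUB hH hN1 hu
    have hv1 := tUB hH hN1 hv
    have hu' : 2*N1*H + H ≤ u := by linarith
    have hv' : 2*N1*H + H ≤ v := by linarith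
    have hud : ∃ j, 1 ≤ j ∧ j ≤ H - 1 ∧ u = 2*N1*H + H - 1 + 2*j := by
      rcases tElem hu with h | ⟨k,h0,h1,rfl⟩ | ⟨j,h0,h1,rfl⟩ | ⟨j,h0,h1,rfl⟩
      · exfalso; linarith
      · exfalso; nlinarith [mul_nonneg (by linarith : (0:ℤ) ≤ N1 - 1 - k) (by linarith : (0:ℤ) ≤ H)]
      · exfalso; linarith
      · exact ⟨j, h0, h1, rfl⟩
    have hvd : ∃ j, 1 ≤ j ∧ j ≤ H - 1 ∧ v = 2*N1*H + H - 1 + 2*j := by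
      rcases tElem hv with h | ⟨k,h0,h1,rfl⟩ | ⟨j,h0,h1,rfl⟩ | ⟨j,h0,h1,rfl⟩
      · exfalso; linarith
      · exfalso; nlinarith [mul_nonneg (by linarith : (0:ℤ) ≤ N1 - 1 - k) (by linarith : (0:ℤ) ≤ H)]
      · exfalso; linarith
      · exact ⟨j, h0, h1, rfl⟩
    obtain ⟨j,hj1,hj2,rfl⟩ := hud
    obtain ⟨j',hj1',hj2',rfl⟩ := hvd
    have : 2*(j+j') = 2*H - 1 := by linarith
    omega
  · have h1 := tLB hH hN1 hu
    have h2 := tLB hH hN1 hv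
    linarith

lemma aBnd (hH : 3 ≤ H) (hN1 : 2 ≤ N1) {x : ℤ} (hx : x ∈ AULAs (2*H) N1) :
    0 ≤ x ∧ x ≤ 2*N1*H + H - 1 := by
  rcases aElem hx with ⟨k,h0,h1,rfl⟩ | ⟨j,h0,h1,rfl⟩ | ⟨j,h0,h1,rfl⟩
  · constructor
    · nlinarith [mul_nonneg h0 (by linarith : (0:ℤ) ≤ H)]
    · nlinarith [mul_nonneg (by linarith : (0:ℤ) ≤ N1 - 1 - k) (by linarith : (0:ℤ) ≤ H)]
  · constructor
    · nlinarith [mul_nonneg (by linarith : (0:ℤ) ≤ N1) (by linarith : (0:ℤ) ≤ H)]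
    · omega
  · constructor
    · nlinarith [mul_nonneg (by linarith : (0:ℤ) ≤ N1) (by linarith : (0:ℤ) ≤ H)]
    · omega

lemma aNot (hH : 3 ≤ H) (hN1 : 2 ≤ N1) :
    (4*N1*H + 2*H - 1) ∉ SDC (AULAs (2*H) N1) := by
  have hNH : 6 ≤ N1 * H := by nlinarith
  rintro ((⟨u,hu,v,hv,he⟩|⟨u,hu,v,hv,he⟩)|⟨u,hu,v,hv,he⟩)
  · have h1 := aBnd hH hN1 hu
    have h2 := aBnd hH hN1 hv
    obtain ⟨h1a,h1b⟩ := h1; obtain ⟨h2a,h2b⟩ := h2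
    linarith
  · have h1 := aBnd hH hN1 hu
    have h2 := aBnd hH hN1 hv
    obtain ⟨h1a,h1b⟩ := h1; obtain ⟨h2a,h2b⟩ := h2
    linarith
  · have h1 := aBnd hH hN1 hu
    have h2 := aBnd hH hN1 hv
    obtain ⟨h1a,h1b⟩ := h1; obtain ⟨h2a,h2b⟩ := h2
    linarith

end

section
variable {H N1 : ℤ}

lemma tCov (hH : 3 ≤ H) (hN1 : 2 ≤ N1) {n : ℤ} (h0 : 0 ≤ n)
    (h1 : n ≤ 4*N1*H + 4*H - 4) : n ∈ SDC (TSAULAs (2*H) N1) := by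
  obtain ⟨r, s, hn, hs0, hs1⟩ : ∃ r s : ℤ, n = 2*H*r + s ∧ 0 ≤ s ∧ s < 2*H :=
    ⟨n / (2*H), n % (2*H), by linarith [Int.mul_ediv_add_emod n (2*H)],
      Int.emod_nonneg n (by linarith), Int.emod_lt_of_pos n (by linarith)⟩
  subst hn
  have hr0 : 0 ≤ r := by
    by_contra hc; push_neg at hc
    nlinarith [mul_nonneg (by linarith : (0:ℤ) ≤ -1 - r) (by linarith : (0:ℤ) ≤ 2*H)]
  have hr1 : r ≤ 2*N1 + 1 := by
    by_contra hc; push_neg at hc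
    nlinarith [mul_nonneg (by linarith : (0:ℤ) ≤ r - 2*N1 - 2) (by linarith : (0:ℤ) ≤ 2*H)]
  rcases Int.even_or_odd s with ⟨t, rfl⟩ | ⟨t, rfl⟩
  · -- s = t + t (even)
    rcases le_or_gt r (N1 - 1) with hc1 | hc1
    · rcases eq_or_ne t 0 with rfl | ht0
      · rcases eq_or_ne r 0 with rfl | hr
        · exact sdcDiff (tA (k := 0) (by omega) (by omega) rfl)
            (tA (k := 0) (by omega) (by omega) rfl) (by ring)
        · exact sdcSum (tA (k := r - 1) (by omega) (by omega) rfl)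
            (tA (k := 0) (by omega) (by omega) rfl) (by ring)
      · exact sdcDiff (tB (j := t) (by omega) (by omega) rfl)
          (tA (k := N1 - 1 - r) (by omega) (by omega) rfl) (by ring)
    · rcases le_or_gt r (2*N1 - 1) with hc2 | hc2
      · rcases eq_or_ne t 0 with rfl | ht0
        · exact sdcSum (tA (k := N1 - 1) (by omega) (by omega) rfl)
            (tA (k := r - N1) (by omega) (by omega) rfl) (by ring)
        · exact sdcSum (tB (j := t) (by omega) (by omega) rfl)
            (tA (k := r - N1) (by omega) (by omega) rfl) (by ring)
      · rcases eq_or_ne r (2*N1) with rfl | hr2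
        · rcases eq_or_ne t (H - 1) with rfl | htH
          · exact sdcNsum (tC rfl) (tC rfl) (by ring)
          · exact sdcSum (tB (j := H - 1) (by omega) (by omega) rfl)
              (tB (j := t + 1) (by omega) (by omega) rfl) (by ring)
        · have hre : r = 2*N1 + 1 := by omega
          subst hre
          have htb : t ≤ H - 2 := by linarith
          exact sdcDiff (tD (j := t + 1) (by omega) (by omega) rfl) (tC rfl) (by ring)
  · -- s = 2t + 1 (odd)
    rcases le_or_gt r (N1 - 1) with hc1 | hc1
    · rcases eq_or_ne t (H - 1) with rfl | htH
      · exact sdcNsum (tC rfl) (tA (k := N1 - 1 - r) (by omega) (by omega) rfl) (by ring)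
      · rcases eq_or_ne r 0 with rfl | hr
        · exact sdcNsum (tC rfl) (tB (j := H - 1 - t) (by omega) (by omega) rfl) (by ring)
        · exact sdcDiff (tD (j := t + 1) (by omega) (by omega) rfl)
            (tA (k := N1 - r) (by omega) (by omega) rfl) (by ring)
    · rcases le_or_gt r (2*N1) with hc2 | hc2
      · rcases eq_or_ne t (H - 1) with rfl | htH
        · rcases eq_or_ne r (2*N1) with rfl | hr2
          · exact sdcSum (tB (j := 1) (by omega) (by omega) rfl)
              (tD (j := H - 1) (by omega) (by omega) rfl) (by ring)
          · exact sdcDiff (tA (k := r - N1) (by omega) (by omega) rfl) (tC rfl) (by ring)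
        · rcases eq_or_ne r N1 with rfl | hrn
          · exact sdcDiff (tD (j := t + 1) (by omega) (by omega) rfl)
              (tA (k := 0) (by omega) (by omega) rfl) (by ring)
          · exact sdcSum (tA (k := r - N1 - 1) (by omega) (by omega) rfl)
              (tD (j := t + 1) (by omega) (by omega) rfl) (by ring)
      · have hre : r = 2*N1 + 1 := by omega
        subst hre
        have htb : t ≤ H - 3 := by linarith
        exact sdcSum (tB (j := H - 1) (by omega) (by omega) rfl)
          (tD (j := t + 2) (by omega) (by omega) rfl) (by ring)

lemma aCov (hH : 3 ≤ H) (hN1 : 2 ≤ N1) {n : ℤ} (h0 : 0 ≤ n)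
    (h1 : n ≤ 4*N1*H + 2*H - 2) : n ∈ SDC (AULAs (2*H) N1) := by
  obtain ⟨r, s, hn, hs0, hs1⟩ : ∃ r s : ℤ, n = 2*H*r + s ∧ 0 ≤ s ∧ s < 2*H :=
    ⟨n / (2*H), n % (2*H), by linarith [Int.mul_ediv_add_emod n (2*H)],
      Int.emod_nonneg n (by linarith), Int.emod_lt_of_pos n (by linarith)⟩
  subst hn
  have hr0 : 0 ≤ r := by
    by_contra hc; push_neg at hc
    nlinarith [mul_nonneg (by linarith : (0:ℤ) ≤ -1 - r) (by linarith : (0:ℤ) ≤ 2*H)]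
  have hr1 : r ≤ 2*N1 := by
    by_contra hc; push_neg at hc
    nlinarith [mul_nonneg (by linarith : (0:ℤ) ≤ r - 2*N1 - 1) (by linarith : (0:ℤ) ≤ 2*H)]
  rcases le_or_gt r (N1 - 1) with hc1 | hc1
  · rcases eq_or_ne r 0 with rfl | hr
    · rcases le_or_gt s (H - 1) with h | h
      · exact sdcDiff (aB (j := H) (by omega) (by omega) rfl)
          (aB (j := H - s) (by omega) (by omega) rfl) (by ring)
      · exact sdcDiff (aB (j := s - H + 1) (by omega) (by omega) rfl)
          (aA (k := N1 - 1) (by omega) (by omega) rfl) (by ring)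
    · rcases eq_or_ne s 0 with rfl | hs
      · exact sdcDiff (aA (k := r) (by omega) (by omega) rfl)
          (aA (k := 0) (by omega) (by omega) rfl) (by ring)
      · rcases le_or_gt s (H - 1) with h | h
        · exact sdcDiff (aC (j := s) (by omega) (by omega) rfl)
            (aA (k := N1 - r) (by omega) (by omega) rfl) (by ring)
        · exact sdcDiff (aB (j := s - H + 1) (by omega) (by omega) rfl)
            (aA (k := N1 - 1 - r) (by omega) (by omega) rfl) (by ring)
  · rcases le_or_gt r (2*N1 - 2) with hc2 | hc2
    · rcases eq_or_ne s 0 with rfl | hs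
      · exact sdcSum (aA (k := N1 - 1) (by omega) (by omega) rfl)
          (aA (k := r - N1 + 1) (by omega) (by omega) rfl) (by ring)
      · rcases le_or_gt s (H - 1) with h | h
        · exact sdcSum (aC (j := s) (by omega) (by omega) rfl)
            (aA (k := r - N1) (by omega) (by omega) rfl) (by ring)
        · exact sdcSum (aB (j := s - H + 1) (by omega) (by omega) rfl)
            (aA (k := r - N1 + 1) (by omega) (by omega) rfl) (by ring)
    · rcases eq_or_ne r (2*N1 - 1) with rfl | hr2
      · rcases le_or_gt s (H - 1) with h | h
        · exact sdcSum (aB (j := 1) (by omega) (by omega) rfl)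
            (aB (j := s + 1) (by omega) (by omega) rfl) (by ring)
        · rcases eq_or_ne s (2*H - 1) with rfl | hs2
          · exact sdcSum (aB (j := H - 1) (by omega) (by omega) rfl)
              (aC (j := 1) (by omega) (by omega) rfl) (by ring)
          · exact sdcSum (aB (j := H) (by omega) (by omega) rfl)
              (aB (j := s - H + 2) (by omega) (by omega) rfl) (by ring)
      · have hre : r = 2*N1 := by omega
        subst hre
        have hsb : s ≤ 2*H - 2 := by linarith
        rcases le_or_gt s (H - 2) with h | h
        · exact sdcSum (aB (j := H) (by omega) (by omega) rfl)
            (aC (j := s + 1) (by omega) (by omega) rfl) (by ring)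
        · rcases eq_or_ne s (2*H - 2) with rfl | hs2
          · exact sdcSum (aC (j := H - 1) (by omega) (by omega) rfl)
              (aC (j := H - 1) (by omega) (by omega) rfl) (by ring)
          · exact sdcSum (aC (j := H - 2) (by omega) (by omega) rfl)
              (aC (j := s - H + 2) (by omega) (by omega) rfl) (by ring)

end


theorem stmt18 (M N1 : ℤ) (hM : 6 ≤ M) (hMe : Even M) (hN1 : 2 ≤ N1) :
    IsGreatest {m : ℤ | 0 ≤ m ∧ ∀ n : ℤ, |n| ≤ m → n ∈ SDC (TSAULAs M N1)}
      (2 * N1 * M + 2 * M - 4) ∧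
    IsGreatest {m : ℤ | 0 ≤ m ∧ ∀ n : ℤ, |n| ≤ m → n ∈ SDC (AULAs M N1)}
      (2 * N1 * M + M - 2) ∧
    2 * (2 * N1 * M + 2 * M - 4) + 1 = 4 * N1 * M + 4 * M - 7 ∧
    2 * (2 * N1 * M + M - 2) + 1 = 4 * N1 * M + 2 * M - 3 ∧
    (4 * N1 * M + 4 * M - 7) - (4 * N1 * M + 2 * M - 3) = 2 * M - 4 ∧
    (0 : ℤ) < 2 * M - 4 := by
  obtain ⟨H, rfl⟩ : ∃ H, M = 2 * H := ⟨M / 2, by obtain ⟨w, hw⟩ := hMe; omega⟩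
  have hH : 3 ≤ H := by omega
  have hNH : 6 ≤ N1 * H := by nlinarith
  refine ⟨⟨⟨by nlinarith, fun n hn => ?_⟩, ?_⟩, ⟨⟨by nlinarith, fun n hn => ?_⟩, ?_⟩,
    by ring, by ring, by ring, by omega⟩
  · rcases abs_le.mp hn with ⟨hlo, hhi⟩
    rcases le_or_gt 0 n with h | h
    · exact tCov hH hN1 h (by linarith)
    · rw [← neg_neg n]
      exact sdcNeg (tCov hH hN1 (by linarith) (by linarith))
  · rintro b ⟨hb0, hb⟩
    by_contra hc; push_neg at hc
    refine tNot hH hN1 (hb _ ?_)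
    rw [abs_of_nonneg (by nlinarith : (0:ℤ) ≤ 4*N1*H + 4*H - 3)]
    linarith
  · rcases abs_le.mp hn with ⟨hlo, hhi⟩
    rcases le_or_gt 0 n with h | h
    · exact aCov hH hN1 h (by linarith)
    · rw [← neg_neg n]
      exact sdcNeg (aCov hH hN1 (by linarith) (by linarith))
  · rintro b ⟨hb0, hb⟩
    by_contra hc; push_neg at hc
    refine aNot hH hN1 (hb _ ?_)
    rw [abs_of_nonneg (by nlinarith : (0:ℤ) ≤ 4*N1*H + 2*H - 1)]
    linarith
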